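/- There exists a constant C > 0, depending only on q, such that for every function u : 𝔛 → ℂ and every x ∈ 𝔛, sup_{n ≥ 0} |ε_n u(x)| ≤ C·( ℳu(x) + |u(x)| ), where the inequality is understood in [0,∞]. -/

import Mathlib

section PreAux
open SimpleGraph

section GraphLemmas
variable {V : Type} {G : SimpleGraph V}

lemma walk_split {a b : V} (p : G.Walk a b) :
    ∀ n ≤ p.length, ∃ (v : V) (p1 : G.Walk a v) (p2 : G.Walk v b),
      p1.length = n ∧ p2.length = p.length - n := by
  induction p with
  | nil =>
    intro n hn
    obtain rfl : n = 0 := Nat.le_zero.mp hn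
    exact ⟨_, Walk.nil, Walk.nil, rfl, rfl⟩
  | @cons u x b h q ih =>
    intro n hn
    cases n with
    | zero => exact ⟨u, Walk.nil, Walk.cons h q, rfl, rfl⟩
    | succ n =>
      obtain ⟨v, p1, p2, h1, h2⟩ := ih n (by simpa using hn)
      exact ⟨v, Walk.cons h p1, p2, by simp [h1], by simpa using h2⟩

lemma exists_mid (hc : G.Connected) (o x : V) {n : ℕ} (hn : n ≤ G.dist o x) :
    ∃ v : V, G.dist o v = n ∧ G.dist v x = G.dist o x - n := by
  obtain ⟨p, hp⟩ := hc.exists_walk_length_eq_dist o x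
  obtain ⟨v, p1, p2, h1, h2⟩ := walk_split p n (by omega)
  have d1 : G.dist o v ≤ n := h1 ▸ SimpleGraph.dist_le p1
  have d2 : G.dist v x ≤ G.dist o x - n := by rw [← hp]; exact h2 ▸ SimpleGraph.dist_le p2
  have tri : G.dist o x ≤ G.dist o v + G.dist v x := hc.dist_triangle
  exact ⟨v, by omega, by omega⟩

lemma exists_closer (hc : G.Connected) {x y : V} (h : G.dist x y ≠ 0) :
    ∃ w : V, G.Adj w y ∧ G.dist x w + 1 = G.dist x y := by
  obtain ⟨p, hp⟩ := hc.exists_walk_length_eq_dist x y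
  obtain ⟨v, p1, p2, h1, h2⟩ := walk_split p (G.dist x y - 1) (by omega)
  have hl2 : p2.length = 1 := by omega
  have hadj : G.Adj v y := p2.adj_of_length_eq_one hl2
  have d1 : G.dist x v ≤ G.dist x y - 1 := h1 ▸ SimpleGraph.dist_le p1
  have tri : G.dist x y ≤ G.dist x v + G.dist v y := hc.dist_triangle
  have : G.dist v y ≤ 1 := SimpleGraph.dist_le hadj.toWalk
  exact ⟨v, hadj, by omega⟩

lemma isPath_concat {u v w : V} {p : G.Walk u v} (hp : p.IsPath) (h : G.Adj v w)
    (hw : w ∉ p.support) : (p.concat h).IsPath := by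
  rw [← Walk.isPath_reverse_iff, Walk.reverse_concat]
  exact hp.reverse.cons (by simpa using hw)

lemma subsingleton_closer (hc : G.Connected) (hac : G.IsAcyclic) (o y : V) :
    {z : V | G.Adj y z ∧ G.dist o z ≤ G.dist o y}.Subsingleton := by
  haveI := Classical.decEq V
  rintro z1 ⟨ha1, hd1⟩ z2 ⟨ha2, hd2⟩
  obtain ⟨p1, hp1, hl1⟩ := hc.exists_path_of_dist o z1
  obtain ⟨p2, hp2, hl2⟩ := hc.exists_path_of_dist o z2
  have hns : ∀ (z : V) (hz : G.Adj y z) (hdz : G.dist o z ≤ G.dist o y)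
      (p : G.Walk o z), p.length = G.dist o z → y ∉ p.support := by
    intro z hz hdz p hl hmem
    have h1 : G.dist o y ≤ (p.takeUntil y hmem).length := SimpleGraph.dist_le _
    have h2 : G.dist y z ≤ (p.dropUntil y hmem).length := SimpleGraph.dist_le _
    have h3 : (p.takeUntil y hmem).length + (p.dropUntil y hmem).length = p.length := by
      rw [← Walk.length_append, Walk.take_spec]
    have h4 : G.dist y z = 0 := by omega
    have : y = z := (hc y z).dist_eq_zero_iff.mp h4
    exact hz.ne this
  have hw1 : (p1.concat ha1.symm).IsPath := isPath_concat hp1 ha1.symm (hns z1 ha1 hd1 p1 hl1)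
  have hw2 : (p2.concat ha2.symm).IsPath := isPath_concat hp2 ha2.symm (hns z2 ha2 hd2 p2 hl2)
  have heq : (⟨_, hw1⟩ : G.Path o y) = ⟨_, hw2⟩ := hac.path_unique _ _
  have heqw : p1.concat ha1.symm = p2.concat ha2.symm := congrArg Subtype.val heq
  have hlen : p1.length = p2.length := by
    have := congrArg Walk.length heqw
    simpa [Walk.length_concat] using this
  have hv1 : (p1.concat ha1.symm).getVert p1.length = z1 := by
    rw [Walk.concat_eq_append, Walk.getVert_append]
    simp
  have hv2 : (p2.concat ha2.symm).getVert p2.length = z2 := by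
    rw [Walk.concat_eq_append, Walk.getVert_append]
    simp
  rw [← hv1, ← hv2, heqw, hlen]

end GraphLemmas

section CardHelpers
variable {α β : Type}

lemma ncard_biUnion_le' (s : Set α) (hs : s.Finite) (t : α → Set β)
    (ht : ∀ a, (t a).Finite) (k : ℕ) (hk : ∀ a ∈ s, (t a).ncard ≤ k) :
    (⋃ a ∈ s, t a).ncard ≤ k * s.ncard := by
  classical
  have hU : (⋃ a ∈ s, t a) = ↑(hs.toFinset.biUnion fun a => (ht a).toFinset) := by
    ext b; simp
  rw [hU, Set.ncard_coe_finset]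
  calc (hs.toFinset.biUnion fun a => (ht a).toFinset).card
      ≤ ∑ a ∈ hs.toFinset, ((ht a).toFinset).card := Finset.card_biUnion_le
    _ ≤ ∑ _a ∈ hs.toFinset, k := by
        refine Finset.sum_le_sum fun a ha => ?_
        rw [← Set.ncard_eq_toFinset_card (t a) (ht a)]
        exact hk a (hs.mem_toFinset.mp ha)
    _ = k * s.ncard := by
        rw [Finset.sum_const, smul_eq_mul, mul_comm, Set.ncard_eq_toFinset_card s hs]

lemma le_ncard_biUnion (s : Set α) (hs : s.Finite) (t : α → Set β)
    (ht : ∀ a, (t a).Finite)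
    (hdisj : ∀ a₁ ∈ s, ∀ a₂ ∈ s, a₁ ≠ a₂ → Disjoint (t a₁) (t a₂))
    (k : ℕ) (hk : ∀ a ∈ s, k ≤ (t a).ncard) :
    k * s.ncard ≤ (⋃ a ∈ s, t a).ncard := by
  classical
  have hU : (⋃ a ∈ s, t a) = ↑(hs.toFinset.biUnion fun a => (ht a).toFinset) := by
    ext b; simp
  rw [hU, Set.ncard_coe_finset]
  rw [Finset.card_biUnion (by
    intro a₁ h₁ a₂ h₂ hne
    have := hdisj a₁ (hs.mem_toFinset.mp h₁) a₂ (hs.mem_toFinset.mp h₂) hne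
    simpa [Set.Finite.disjoint_toFinset] using this)]
  calc k * s.ncard = ∑ _a ∈ hs.toFinset, k := by
        rw [Finset.sum_const, smul_eq_mul, mul_comm, Set.ncard_eq_toFinset_card s hs]
    _ ≤ ∑ a ∈ hs.toFinset, ((ht a).toFinset).card := by
        refine Finset.sum_le_sum fun a ha => ?_
        rw [← Set.ncard_eq_toFinset_card (t a) (ht a)]
        exact hk a (hs.mem_toFinset.mp ha)

end CardHelpers

end PreAux


open Complex MeasureTheory ENNReal Filter

noncomputable section

/-- A homogeneous tree of degree `q + 1`: a connected acyclic graph in which every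
vertex has exactly `q + 1` neighbours, together with a fixed reference vertex `o`. -/
structure HomTree (q : ℕ) where
  X : Type
  G : SimpleGraph X
  connected : G.Connected
  acyclic : G.IsAcyclic
  regular : ∀ x : X, (G.neighborSet x).ncard = q + 1
  o : X

namespace HomTree

/-- `τ = 2π / log q`. -/
def tau (q : ℕ) : ℝ := 2 * Real.pi / Real.log q

/-- The meromorphic `c`-function. -/
def cfun (q : ℕ) (z : ℂ) : ℂ :=
  ((q : ℂ) ^ ((1 : ℂ) / 2) / ((q : ℂ) + 1)) *
    (((q : ℂ) ^ ((1 : ℂ) / 2 + I * z) - (q : ℂ) ^ (-(1 : ℂ) / 2 - I * z)) /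
      ((q : ℂ) ^ (I * z) - (q : ℂ) ^ (-(I * z))))

/-- The coefficients `B′(n,m,s)`. -/
def Bp (q : ℕ) (s : ℝ) (n m : ℕ) : ℂ :=
  if n = 0 then
    (q : ℂ) ^ (-(I * (s : ℂ) * (m : ℂ))) +
      cfun q (s : ℂ) * ((q : ℂ) ^ (I * (s : ℂ) * (m : ℂ)) - (q : ℂ) ^ (-(I * (s : ℂ) * (m : ℂ))))
  else
    cfun q (s : ℂ) * (q : ℂ) ^ (I * (s : ℂ) * ((n : ℂ) - 1)) *
      ((q : ℂ) ^ (I * (s : ℂ) * ((m : ℂ) - (n : ℂ) + 1)) -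
        (q : ℂ) ^ (-(I * (s : ℂ) * ((m : ℂ) - (n : ℂ) + 1))))

variable {q : ℕ} (T : HomTree q)

/-- Counting measurable structure on the vertices. -/
instance : MeasurableSpace T.X := ⊤

/-- `|x| = d(o, x)`. -/
def nrm (x : T.X) : ℕ := T.G.dist T.o x

open Classical in
/-- The elementary spherical function `φ_z`. -/
def sph (z : ℂ) (x : T.X) : ℂ :=
  if ∃ k : ℤ, z = (k : ℂ) * (tau q : ℂ) then
    ((((q : ℂ) - 1) / ((q : ℂ) + 1)) * (T.nrm x : ℂ) + 1) * (q : ℂ) ^ (-(T.nrm x : ℂ) / 2)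
  else if ∃ k : ℤ, z = (tau q : ℂ) / 2 + (k : ℂ) * (tau q : ℂ) then
    (-1) ^ (T.nrm x) * ((((q : ℂ) - 1) / ((q : ℂ) + 1)) * (T.nrm x : ℂ) + 1) *
      (q : ℂ) ^ (-(T.nrm x : ℂ) / 2)
  else
    cfun q z * (q : ℂ) ^ ((I * z - 1 / 2) * (T.nrm x : ℂ)) +
      cfun q (-z) * (q : ℂ) ^ ((-(I * z) - 1 / 2) * (T.nrm x : ℂ))

/-- A function on the tree is radial if it depends only on `|x|`. -/
def Radial (f : T.X → ℂ) : Prop := ∀ x y : T.X, T.nrm x = T.nrm y → f x = f y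

/-- The weak `L^r` quasinorm `sup_{t>0} t · μ(|u| > t)^{1/r}` (w.r.t. the counting
measure when the underlying measurable space carries `Measure.count`). -/
def weakN {Y : Type} [MeasurableSpace Y] (r : ℝ) (u : Y → ℂ) : ℝ≥0∞ :=
  ⨆ t : ℝ, ENNReal.ofReal t * (Measure.count {y | t < ‖u y‖}) ^ (1 / r)

/-- The Lorentz `L^{r,1}` norm `(1/r)∫₀^∞ u*(t) t^{1/r-1} dt`, written in the equivalent
layer-cake form `∫₀^∞ μ(|u| > s)^{1/r} ds`. -/
def lorN1 {Y : Type} [MeasurableSpace Y] (r : ℝ) (u : Y → ℂ) : ℝ≥0∞ :=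
  ∫⁻ s in Set.Ioi (0 : ℝ), (Measure.count {y | s < ‖u y‖}) ^ (1 / r)

/-- The boundary `Ω`: infinite geodesic rays starting at `o`. -/
structure Boundary where
  seq : ℕ → T.X
  start : seq 0 = T.o
  adj : ∀ n, T.G.Adj (seq n) (seq (n + 1))
  dist_eq : ∀ n, T.G.dist T.o (seq n) = n

/-- The basic boundary set `E(x) = {ω : ω_{|x|} = x}`. -/
def E (x : T.X) : Set T.Boundary := {ω | ω.seq (T.nrm x) = x}

/-- The σ-algebra on `Ω` generated by the sets `E(x)`. -/
instance : MeasurableSpace T.Boundary :=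
  MeasurableSpace.generateFrom {S | ∃ x : T.X, S = T.E x}

/-- `|c(x,ω)|`: the distance from `o` of the last vertex on the geodesic from `o` to `x`
lying on the ray `ω`. -/
def confl (ω : T.Boundary) (x : T.X) : ℕ :=
  Nat.findGreatest (fun n => n + T.G.dist (ω.seq n) x = T.nrm x) (T.nrm x)

/-- The Poisson kernel `p(x,ω) = q^{h_ω(x)} = q^{2|c(x,ω)| - |x|}`. -/
def pker (ω : T.Boundary) (x : T.X) : ℝ :=
  (q : ℝ) ^ ((2 * (T.confl ω x) : ℤ) - (T.nrm x : ℤ))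

/-- The Poisson transform `P_z F(x) = ∫_Ω p(x,ω)^{1/2+iz} F(ω) dν(ω)`. -/
def ptrans (ν : Measure T.Boundary) (z : ℂ) (F : T.Boundary → ℂ) (x : T.X) : ℂ :=
  ∫ ω, ((T.pker ω x : ℂ) ^ ((1 : ℂ) / 2 + I * z)) * F ω ∂ν

/-- The Laplacian `ℒu(x) = (q+1)⁻¹ ∑_{y ∼ x} u(y)`. -/
def lap (u : T.X → ℂ) (x : T.X) : ℂ :=
  (1 / ((q : ℂ) + 1)) * ∑' y : T.G.neighborSet x, u y

/-- `γ(z) = (q^{1/2+iz} + q^{1/2-iz})/(q+1)`. -/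
def gam (q : ℕ) (z : ℂ) : ℂ :=
  ((q : ℂ) ^ ((1 : ℂ) / 2 + I * z) + (q : ℂ) ^ ((1 : ℂ) / 2 - I * z)) / ((q : ℂ) + 1)

/-- The conditional expectation `ℰ_n F(ω) = ν(E(ω_n))⁻¹ ∫_{E(ω_n)} F dν` (real valued). -/
def condE (ν : Measure T.Boundary) (F : T.Boundary → ℝ) (n : ℕ) (ω : T.Boundary) : ℝ :=
  (ν {ω' : T.Boundary | ω'.seq n = ω.seq n}).toReal⁻¹ *
    ∫ ω' in {ω' : T.Boundary | ω'.seq n = ω.seq n}, F ω' ∂ν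

/-- The conditional expectation (complex valued). -/
def condEC (ν : Measure T.Boundary) (F : T.Boundary → ℂ) (n : ℕ) (ω : T.Boundary) : ℂ :=
  (((ν {ω' : T.Boundary | ω'.seq n = ω.seq n}).toReal⁻¹ : ℝ) : ℂ) *
    ∫ ω' in {ω' : T.Boundary | ω'.seq n = ω.seq n}, F ω' ∂ν

/-- The martingale maximal function `ℰF(ω) = sup_n |ℰ_n F(ω)|`, valued in `[0,∞]`. -/
def maximal (ν : Measure T.Boundary) (F : T.Boundary → ℝ) (ω : T.Boundary) : ℝ≥0∞ :=
  ⨆ n : ℕ, ENNReal.ofReal |T.condE ν F n ω|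

/-- The martingale difference `Δ_n F = ℰ_n F - ℰ_{n-1} F`, with `ℰ_{-1} = 0`. -/
def deltaC (ν : Measure T.Boundary) (F : T.Boundary → ℂ) (n : ℕ) (ω : T.Boundary) : ℂ :=
  T.condEC ν F n ω - if n = 0 then 0 else T.condEC ν F (n - 1) ω

/-- `y` and `x` have the same `n`-th vertex on their geodesics from `o`. -/
def sameAt (n : ℕ) (x y : T.X) : Prop :=
  ∃ v : T.X, T.nrm v = n ∧ T.nrm v + T.G.dist v x = T.nrm x ∧ T.nrm v + T.G.dist v y = T.nrm y

/-- `S(n,x)`: `{x}` if `|x| ≤ n`, and `{y : |y| = |x|, y_n = x_n}` otherwise. -/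
def sphereSet (n : ℕ) (x : T.X) : Set T.X :=
  if T.nrm x ≤ n then {x} else {y | T.nrm y = T.nrm x ∧ T.sameAt n x y}

open Classical in
/-- `ε_n u(x) = (#S(n,x))⁻¹ ∑_{y ∈ S(n,x)} u(y)`. -/
def epsOp (n : ℕ) (u : T.X → ℂ) (x : T.X) : ℂ :=
  (((T.sphereSet n x).ncard : ℂ))⁻¹ * ∑' y : T.sphereSet n x, u y

/-- The ball `B(x,r)`. -/
def ball (x : T.X) (r : ℕ) : Set T.X := {y | T.G.dist x y ≤ r}

/-- `ℳu(x) = sup_{r ≥ 1} (#B(x,r))^{-1/2} ∑_{y ∈ B(x,r)} |u(y)|`, valued in `[0,∞]`. -/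
def maxOp (u : T.X → ℂ) (x : T.X) : ℝ≥0∞ :=
  ⨆ r : ℕ+, (Measure.count (T.ball x (r : ℕ))) ^ (-(1 : ℝ) / 2) *
    ∑' y : T.ball x (r : ℕ), ENNReal.ofReal (‖u y‖)

/-- The Helgason–Fourier transform `f̃(z,ω) = ∑_x f(x) p(x,ω)^{1/2+iz}`. -/
def hft (f : T.X → ℂ) (z : ℂ) (ω : T.Boundary) : ℂ :=
  ∑' x : T.X, f x * ((T.pker ω x : ℂ) ^ ((1 : ℂ) / 2 + I * z))

end HomTree

namespace HomTree


section AuxTree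
open SimpleGraph
variable {q : ℕ} (T : HomTree q)

lemma aux_nbr_finite (x : T.X) : (T.G.neighborSet x).Finite := by
  by_contra h
  have h2 : (T.G.neighborSet x).ncard = 0 := Set.Infinite.ncard h
  rw [T.regular x] at h2
  omega

/-- spheres around a point -/
def auxSphere (x : T.X) (r : ℕ) : Set T.X := {y | T.G.dist x y = r}

lemma auxSphere_zero (x : T.X) : T.auxSphere x 0 = {x} := by
  ext y
  simp only [auxSphere, Set.mem_setOf_eq, Set.mem_singleton_iff]
  rw [T.connected.dist_eq_zero_iff]
  exact eq_comm

lemma auxSphere_one (x : T.X) : T.auxSphere x 1 = T.G.neighborSet x := by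
  ext y
  simp only [auxSphere, Set.mem_setOf_eq, mem_neighborSet]
  exact SimpleGraph.dist_eq_one_iff_adj

lemma auxSphere_bound (hq : 1 ≤ q) (x : T.X) :
    ∀ r : ℕ, (T.auxSphere x r).Finite ∧ (T.auxSphere x r).ncard ≤ 2 * q ^ r := by
  intro r
  induction r with
  | zero =>
    rw [auxSphere_zero]
    simp
  | succ r ih =>
    rcases Nat.eq_zero_or_pos r with rfl | hr
    · rw [auxSphere_one, T.regular x]
      exact ⟨aux_nbr_finite T x, by simp only [zero_add, pow_one]; omega⟩
    · -- r ≥ 1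
      obtain ⟨ihf, ihc⟩ := ih
      set t : T.X → Set T.X := fun w => T.G.neighborSet w ∩ T.auxSphere x (r + 1) with ht
      have htfin : ∀ w, (t w).Finite := fun w => (aux_nbr_finite T w).inter_of_left _
      have hsub : T.auxSphere x (r + 1) ⊆ ⋃ w ∈ T.auxSphere x r, t w := by
        intro y hy
        have hy' : T.G.dist x y = r + 1 := hy
        obtain ⟨w, hadj, hdw⟩ := exists_closer T.connected (x := x) (y := y) (by omega)
        have hw : w ∈ T.auxSphere x r := by
          simp only [auxSphere, Set.mem_setOf_eq]; omega
        exact Set.mem_biUnion hw ⟨hadj, hy⟩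
      have hUfin : (⋃ w ∈ T.auxSphere x r, t w).Finite :=
        Set.Finite.biUnion ihf fun w _ => htfin w
      have hcard : ∀ w ∈ T.auxSphere x r, (t w).ncard ≤ q := by
        intro w hw
        have hw' : T.G.dist x w = r := hw
        obtain ⟨w', hadj', hdw'⟩ := exists_closer T.connected (x := x) (y := w) (by omega)
        have hmem : w' ∈ T.G.neighborSet w := hadj'.symm
        have hsub2 : t w ⊆ T.G.neighborSet w \ {w'} := by
          rintro z ⟨hz1, hz2⟩
          refine ⟨hz1, ?_⟩
          simp only [Set.mem_singleton_iff]
          rintro rfl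
          have : T.G.dist x z = r + 1 := hz2
          omega
        calc (t w).ncard ≤ (T.G.neighborSet w \ {w'}).ncard :=
              Set.ncard_le_ncard hsub2 ((aux_nbr_finite T w).diff)
          _ = (T.G.neighborSet w).ncard - 1 :=
              Set.ncard_diff_singleton_of_mem hmem
          _ = q := by rw [T.regular w]; omega
      refine ⟨hUfin.subset hsub, ?_⟩
      calc (T.auxSphere x (r + 1)).ncard ≤ (⋃ w ∈ T.auxSphere x r, t w).ncard :=
            Set.ncard_le_ncard hsub hUfin
        _ ≤ q * (T.auxSphere x r).ncard := ncard_biUnion_le' _ ihf t htfin q hcard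
        _ ≤ q * (2 * q ^ r) := Nat.mul_le_mul_left q ihc
        _ = 2 * q ^ (r + 1) := by ring

lemma aux_ball_eq (x : T.X) (r : ℕ) :
    T.ball x r = ⋃ k ∈ Finset.range (r + 1), T.auxSphere x k := by
  ext y
  simp only [ball, Set.mem_setOf_eq, Set.mem_iUnion, Finset.mem_range, auxSphere]
  constructor
  · intro h; exact ⟨T.G.dist x y, by omega, rfl⟩
  · rintro ⟨k, hk, h⟩; omega

lemma aux_ball_finite (hq : 1 ≤ q) (x : T.X) (r : ℕ) : (T.ball x r).Finite := by
  rw [aux_ball_eq]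
  exact Set.Finite.biUnion (Finset.range (r + 1)).finite_toSet
    fun k _ => (T.auxSphere_bound hq x k).1

lemma aux_ball_card (hq : 2 ≤ q) (x : T.X) (r : ℕ) : (T.ball x r).ncard ≤ 4 * q ^ r := by
  have key : ∀ r : ℕ, (T.ball x r).ncard ≤ ∑ k ∈ Finset.range (r + 1), 2 * q ^ k := by
    intro r
    rw [aux_ball_eq]
    classical
    have hU : (⋃ k ∈ Finset.range (r + 1), T.auxSphere x k) =
        ⋃ k ∈ ((Finset.range (r+1) : Finset ℕ) : Set ℕ), T.auxSphere x k := by simp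
    rw [hU]
    calc (⋃ k ∈ ((Finset.range (r+1) : Finset ℕ) : Set ℕ), T.auxSphere x k).ncard
        ≤ _ := Set.ncard_le_ncard (subset_refl _) (Set.Finite.biUnion
            (Finset.range (r + 1)).finite_toSet fun k _ => (T.auxSphere_bound (by omega) x k).1)
      _ ≤ ∑ k ∈ Finset.range (r + 1), 2 * q ^ k := ?_
    · -- card of biUnion over finset
      have : (⋃ k ∈ ((Finset.range (r+1) : Finset ℕ) : Set ℕ), T.auxSphere x k) =
          ↑((Finset.range (r+1)).biUnion fun k => ((T.auxSphere_bound (show 1 ≤ q by omega) x k).1).toFinset) := by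
        ext y; simp
      rw [this, Set.ncard_coe_finset]
      calc ((Finset.range (r+1)).biUnion fun k => ((T.auxSphere_bound (show 1 ≤ q by omega) x k).1).toFinset).card
          ≤ ∑ k ∈ Finset.range (r+1), ((T.auxSphere_bound (show 1 ≤ q by omega) x k).1).toFinset.card :=
            Finset.card_biUnion_le
        _ ≤ ∑ k ∈ Finset.range (r + 1), 2 * q ^ k := by
            refine Finset.sum_le_sum fun k _ => ?_
            rw [← Set.ncard_eq_toFinset_card _ ((T.auxSphere_bound (show 1 ≤ q by omega) x k).1)]
            exact (T.auxSphere_bound (by omega) x k).2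
  refine le_trans (key r) ?_
  induction r with
  | zero => simp
  | succ r ih =>
    rw [Finset.sum_range_succ]
    have h1 : 4 * q ^ r + 2 * q ^ (r + 1) ≤ 4 * q ^ (r + 1) := by
      have : 4 * q ^ r ≤ 2 * q ^ (r + 1) := by
        rw [pow_succ]
        calc 4 * q ^ r = q ^ r * 4 := by ring
          _ ≤ q ^ r * (2 * q) := by
              exact Nat.mul_le_mul_left _ (by omega)
          _ = 2 * (q ^ r * q) := by ring
      omega
    omega

end AuxTree


section AuxDesc
open SimpleGraph
variable {q : ℕ} (T : HomTree q)

/-- descendants of `v` at depth `j` -/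
def descSet (v : T.X) (j : ℕ) : Set T.X :=
  {y | T.G.dist T.o v + T.G.dist v y = T.G.dist T.o y ∧ T.G.dist v y = j}

lemma descSet_subset_sphere (v : T.X) (j : ℕ) : T.descSet v j ⊆ T.auxSphere v j :=
  fun _ hy => hy.2

lemma descSet_finite (hq : 1 ≤ q) (v : T.X) (j : ℕ) : (T.descSet v j).Finite :=
  ((T.auxSphere_bound hq v j).1).subset (T.descSet_subset_sphere v j)

lemma descSet_card (hq : 2 ≤ q) (v : T.X) : ∀ j : ℕ, q ^ j ≤ (T.descSet v j).ncard := by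
  have hq1 : 1 ≤ q := by omega
  intro j
  induction j with
  | zero =>
    have hv : v ∈ T.descSet v 0 := by
      constructor
      · simp [SimpleGraph.dist_self]
      · exact SimpleGraph.dist_self
    simpa [Nat.one_le_iff_ne_zero, Nat.pos_iff_ne_zero] using (Set.ncard_pos (T.descSet_finite hq1 v 0)).mpr ⟨v, hv⟩
  | succ j ih =>
    set t : T.X → Set T.X := fun y =>
      T.G.neighborSet y ∩ {z | T.G.dist T.o z = T.G.dist T.o y + 1} with ht
    have htfin : ∀ y, (t y).Finite := fun y => (aux_nbr_finite T y).inter_of_left _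
    have hsub : ∀ y ∈ T.descSet v j, t y ⊆ T.descSet v (j + 1) := by
      rintro y ⟨hy1, hy2⟩ z ⟨hz1, hz2⟩
      have hz1' : T.G.Adj y z := hz1
      have hz2' : T.G.dist T.o z = T.G.dist T.o y + 1 := hz2
      have h1 : T.G.dist y z ≤ 1 := SimpleGraph.dist_le hz1'.toWalk
      have h2 : T.G.dist v z ≤ T.G.dist v y + T.G.dist y z := T.connected.dist_triangle
      have h3 : T.G.dist T.o z ≤ T.G.dist T.o v + T.G.dist v z := T.connected.dist_triangle
      exact ⟨by omega, by omega⟩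
    have hcard : ∀ y ∈ T.descSet v j, q ≤ (t y).ncard := by
      intro y _
      have hbad : {z : T.X | T.G.Adj y z ∧ T.G.dist T.o z ≤ T.G.dist T.o y}.Subsingleton :=
        subsingleton_closer T.connected T.acyclic T.o y
      have hbadfin : {z : T.X | T.G.Adj y z ∧ T.G.dist T.o z ≤ T.G.dist T.o y}.Finite :=
        (aux_nbr_finite T y).subset fun z hz => hz.1
      have hbad1 : {z : T.X | T.G.Adj y z ∧ T.G.dist T.o z ≤ T.G.dist T.o y}.ncard ≤ 1 :=
        (Set.ncard_le_one hbadfin).mpr fun a ha b hb => hbad ha hb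
      have hcover : T.G.neighborSet y ⊆
          {z : T.X | T.G.Adj y z ∧ T.G.dist T.o z ≤ T.G.dist T.o y} ∪ t y := by
        intro z hz
        have hz' : T.G.Adj y z := hz
        have h1 : T.G.dist y z ≤ 1 := SimpleGraph.dist_le hz'.toWalk
        have h3 : T.G.dist T.o z ≤ T.G.dist T.o y + T.G.dist y z := T.connected.dist_triangle
        by_cases hc : T.G.dist T.o z ≤ T.G.dist T.o y
        · exact Or.inl ⟨hz', hc⟩
        · exact Or.inr ⟨hz, by simp only [Set.mem_setOf_eq]; omega⟩
      have := Set.ncard_le_ncard hcover (hbadfin.union (htfin y))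
      rw [T.regular y] at this
      have hun := Set.ncard_union_le
        {z : T.X | T.G.Adj y z ∧ T.G.dist T.o z ≤ T.G.dist T.o y} (t y)
      omega
    have hdisj : ∀ y₁ ∈ T.descSet v j, ∀ y₂ ∈ T.descSet v j, y₁ ≠ y₂ →
        Disjoint (t y₁) (t y₂) := by
      intro y₁ h₁ y₂ h₂ hne
      rw [Set.disjoint_left]
      rintro z ⟨hz1, hz1'⟩ ⟨hz2, hz2'⟩
      have ha1 : T.G.Adj y₁ z := hz1
      have ha2 : T.G.Adj y₂ z := hz2
      have e1 : T.G.dist T.o z = T.G.dist T.o y₁ + 1 := hz1'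
      have e2 : T.G.dist T.o z = T.G.dist T.o y₂ + 1 := hz2'
      have : y₁ = y₂ := by
        refine subsingleton_closer T.connected T.acyclic T.o z ?_ ?_
        · exact ⟨ha1.symm, by omega⟩
        · exact ⟨ha2.symm, by omega⟩
      exact hne this
    have hUsub : (⋃ y ∈ T.descSet v j, t y) ⊆ T.descSet v (j + 1) := by
      intro z hz
      obtain ⟨y, hy, hzy⟩ := Set.mem_iUnion₂.mp hz
      exact hsub y hy hzy
    calc q ^ (j + 1) = q * q ^ j := by ring
      _ ≤ q * (T.descSet v j).ncard := Nat.mul_le_mul_left q ih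
      _ ≤ (⋃ y ∈ T.descSet v j, t y).ncard :=
          le_ncard_biUnion _ (T.descSet_finite hq1 v j) t htfin hdisj q hcard
      _ ≤ (T.descSet v (j + 1)).ncard :=
          Set.ncard_le_ncard hUsub (T.descSet_finite hq1 v (j + 1))

end AuxDesc

section AuxMeasure
variable {q : ℕ} (T : HomTree q)

instance : MeasurableSingletonClass T.X :=
  ⟨fun _ => MeasurableSpace.measurableSet_top⟩

lemma aux_count_eq {s : Set T.X} (hs : s.Finite) :
    MeasureTheory.Measure.count s = (s.ncard : ℝ≥0∞) := by
  rw [MeasureTheory.Measure.count_apply_finite s hs, Set.ncard_eq_toFinset_card s hs]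

end AuxMeasure

/-- There is `C > 0` depending only on `q` with
`sup_{n ≥ 0} |ε_n u(x)| ≤ C(ℳu(x) + |u(x)|)` in `[0,∞]`. -/
theorem statement15 {q : ℕ} (hq : 2 ≤ q) (T : HomTree q) :
    ∃ C : ℝ, 0 < C ∧ ∀ (u : T.X → ℂ) (x : T.X),
      (⨆ n : ℕ, ENNReal.ofReal (‖T.epsOp n u x‖)) ≤
        ENNReal.ofReal C * (T.maxOp u x + ENNReal.ofReal (‖u x‖)) := by
  have hq1 : 1 ≤ q := by omega
  refine ⟨2, by norm_num, fun u x => ?_⟩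
  have h2 : ENNReal.ofReal (2 : ℝ) = 2 := by
    rw [ENNReal.ofReal_ofNat]
  refine iSup_le fun n => ?_
  by_cases hxn : T.nrm x ≤ n
  · -- here `ε_n u x = u x`
    have hs : T.sphereSet n x = {x} := by
      rw [sphereSet, if_pos hxn]
    have heq : T.epsOp n u x = u x := by
      rw [epsOp, hs]
      rw [tsum_singleton x u]
      simp
    rw [heq]
    calc ENNReal.ofReal (‖u x‖)
        ≤ T.maxOp u x + ENNReal.ofReal (‖u x‖) := le_add_self
      _ ≤ ENNReal.ofReal 2 * (T.maxOp u x + ENNReal.ofReal (‖u x‖)) := by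
          rw [h2]
          nth_rewrite 1 [← one_mul (T.maxOp u x + ENNReal.ofReal (‖u x‖))]
          exact mul_le_mul' (by norm_num) le_rfl
  · -- main case
    push_neg at hxn
    set m : ℕ := T.nrm x - n with hm
    have hm1 : 1 ≤ m := by omega
    have hnx : n ≤ T.G.dist T.o x := le_of_lt hxn
    obtain ⟨v, hv1, hv2⟩ := exists_mid T.connected T.o x hnx
    have hSdef : T.sphereSet n x = {y | T.nrm y = T.nrm x ∧ T.sameAt n x y} := by
      rw [sphereSet, if_neg (by omega)]
    -- the sphere set is contained in the ball of radius 2m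
    have hSsub : T.sphereSet n x ⊆ T.ball x (2 * m) := by
      intro y hy
      rw [hSdef] at hy
      obtain ⟨hy1, v', hv'1, hv'2, hv'3⟩ := hy
      have htri : T.G.dist x y ≤ T.G.dist x v' + T.G.dist v' y := T.connected.dist_triangle
      have hcomm : T.G.dist x v' = T.G.dist v' x := SimpleGraph.dist_comm
      have : T.G.dist x y ≤ 2 * m := by
        simp only [nrm] at hy1 hv'1 hv'2 hv'3 hm ⊢
        omega
      exact this
    -- the descendants of `v` are contained in the sphere set
    have hDsub : T.descSet v m ⊆ T.sphereSet n x := by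
      rintro y ⟨h1, h2⟩
      rw [hSdef]
      have hvx : T.G.dist v x = m := by simp only [nrm] at hm ⊢; omega
      refine ⟨?_, v, ?_, ?_, ?_⟩
      · simp only [nrm]; omega
      · simp only [nrm]; omega
      · simp only [nrm]; omega
      · simp only [nrm]; omega
    have hBfin : (T.ball x (2 * m)).Finite := T.aux_ball_finite hq1 x (2 * m)
    have hSfin : (T.sphereSet n x).Finite := hBfin.subset hSsub
    set N : ℕ := (T.sphereSet n x).ncard with hN
    set B : ℕ := (T.ball x (2 * m)).ncard with hB
    have hNq : q ^ m ≤ N :=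
      le_trans (T.descSet_card hq v m) (Set.ncard_le_ncard hDsub hSfin)
    have hNpos : 1 ≤ N := le_trans (Nat.one_le_pow m q (by omega)) hNq
    have hBle : B ≤ (2 * N) ^ 2 := by
      have h1 : B ≤ 4 * q ^ (2 * m) := T.aux_ball_card hq x (2 * m)
      have h2' : q ^ (2 * m) = (q ^ m) ^ 2 := by rw [← pow_mul, mul_comm]
      have h3 : (q ^ m) ^ 2 ≤ N ^ 2 := Nat.pow_le_pow_left hNq 2
      nlinarith
    have hBpos : 1 ≤ B := by
      have hx : x ∈ T.ball x (2 * m) := by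
        show T.G.dist x x ≤ 2 * m
        simp [SimpleGraph.dist_self]
      exact (Set.ncard_pos hBfin).mpr ⟨x, hx⟩
    -- the pointwise bound on `ε_n u x`
    haveI : Fintype (T.sphereSet n x) := hSfin.fintype
    have habs : ‖T.epsOp n u x‖ ≤
        (N : ℝ)⁻¹ * ∑ y : T.sphereSet n x, ‖u y‖ := by
      rw [epsOp, norm_mul, norm_inv, Complex.norm_natCast, tsum_fintype]
      gcongr
      simpa using
        norm_sum_le (Finset.univ : Finset (T.sphereSet n x)) (fun y => u ↑y)
    have h1 : ENNReal.ofReal (‖T.epsOp n u x‖) ≤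
        (N : ℝ≥0∞)⁻¹ * ∑' (y : T.sphereSet n x), ENNReal.ofReal (‖u y‖) := by
      calc ENNReal.ofReal (‖T.epsOp n u x‖)
          ≤ ENNReal.ofReal ((N : ℝ)⁻¹ * ∑ y : T.sphereSet n x, ‖u y‖) :=
            ENNReal.ofReal_le_ofReal habs
        _ = ENNReal.ofReal (N : ℝ)⁻¹ *
              ENNReal.ofReal (∑ y : T.sphereSet n x, ‖u y‖) :=
            ENNReal.ofReal_mul (by positivity)
        _ = (N : ℝ≥0∞)⁻¹ * ∑' (y : T.sphereSet n x), ENNReal.ofReal (‖u y‖) := by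
            rw [ENNReal.ofReal_inv_of_pos (by positivity), ENNReal.ofReal_natCast,
              ENNReal.ofReal_sum_of_nonneg (fun _ _ => norm_nonneg _), tsum_fintype]
    have hsum : (∑' (y : T.sphereSet n x), ENNReal.ofReal (‖u y‖)) ≤
        ∑' (y : T.ball x (2 * m)), ENNReal.ofReal (‖u y‖) := by
      rw [tsum_subtype (T.sphereSet n x) (fun z => ENNReal.ofReal (‖u z‖)),
        tsum_subtype (T.ball x (2 * m)) (fun z => ENNReal.ofReal (‖u z‖))]
      exact ENNReal.tsum_le_tsum fun y =>
        Set.indicator_le_indicator_of_subset hSsub (fun _ => zero_le) y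
    -- relation to the maximal function
    have hmax : (MeasureTheory.Measure.count (T.ball x (2 * m))) ^ (-(1 : ℝ) / 2) *
        ∑' (y : T.ball x (2 * m)), ENNReal.ofReal (‖u y‖) ≤ T.maxOp u x := by
      exact le_iSup (fun r : ℕ+ => (MeasureTheory.Measure.count (T.ball x (r : ℕ))) ^ (-(1 : ℝ) / 2) *
        ∑' (y : T.ball x (r : ℕ)), ENNReal.ofReal (‖u y‖))
        (⟨2 * m, by omega⟩ : ℕ+)
    have hcount : MeasureTheory.Measure.count (T.ball x (2 * m)) = (B : ℝ≥0∞) :=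
      aux_count_eq T hBfin
    -- the key numeric inequality
    have hkey : (N : ℝ≥0∞)⁻¹ ≤ 2 * (B : ℝ≥0∞) ^ (-(1 : ℝ) / 2) := by
      have hc1 : (B : ℝ≥0∞) ^ ((1 : ℝ) / 2) ≤ ((2 * N : ℕ) : ℝ≥0∞) := by
        have hle : (B : ℝ≥0∞) ≤ ((2 * N : ℕ) : ℝ≥0∞) ^ (2 : ℕ) := by
          rw [← Nat.cast_pow]
          exact_mod_cast Nat.cast_le.mpr hBle
        calc (B : ℝ≥0∞) ^ ((1 : ℝ) / 2)
            ≤ (((2 * N : ℕ) : ℝ≥0∞) ^ (2 : ℕ)) ^ ((1 : ℝ) / 2) :=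
              ENNReal.rpow_le_rpow hle (by norm_num)
          _ = ((2 * N : ℕ) : ℝ≥0∞) := by
              rw [← ENNReal.rpow_natCast ((2 * N : ℕ) : ℝ≥0∞) 2, ← ENNReal.rpow_mul]
              norm_num
      have hc2 : (((2 * N : ℕ) : ℝ≥0∞))⁻¹ ≤ (B : ℝ≥0∞) ^ (-(1 : ℝ) / 2) := by
        rw [neg_div, ENNReal.rpow_neg]
        exact ENNReal.inv_le_inv.mpr hc1
      have hc3 : ((2 * N : ℕ) : ℝ≥0∞) = 2 * (N : ℝ≥0∞) := by push_cast; ring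
      have hc4 : (2 * (N : ℝ≥0∞))⁻¹ = 2⁻¹ * (N : ℝ≥0∞)⁻¹ :=
        ENNReal.mul_inv (Or.inl (by norm_num)) (Or.inl (by norm_num))
      calc (N : ℝ≥0∞)⁻¹ = 2 * (2⁻¹ * (N : ℝ≥0∞)⁻¹) := by
            rw [← mul_assoc, ENNReal.mul_inv_cancel (by norm_num) (by norm_num), one_mul]
        _ = 2 * ((2 * (N : ℝ≥0∞))⁻¹) := by rw [hc4]
        _ ≤ 2 * ((B : ℝ≥0∞) ^ (-(1 : ℝ) / 2)) := by
            rw [← hc3]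
            exact mul_le_mul' le_rfl hc2
    -- assemble
    calc ENNReal.ofReal (‖T.epsOp n u x‖)
        ≤ (N : ℝ≥0∞)⁻¹ * ∑' (y : T.sphereSet n x), ENNReal.ofReal (‖u y‖) := h1
      _ ≤ (N : ℝ≥0∞)⁻¹ * ∑' (y : T.ball x (2 * m)), ENNReal.ofReal (‖u y‖) :=
          mul_le_mul' le_rfl hsum
      _ ≤ (2 * (B : ℝ≥0∞) ^ (-(1 : ℝ) / 2)) *
            ∑' (y : T.ball x (2 * m)), ENNReal.ofReal (‖u y‖) :=
          mul_le_mul' hkey le_rfl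
      _ = 2 * ((MeasureTheory.Measure.count (T.ball x (2 * m))) ^ (-(1 : ℝ) / 2) *
            ∑' (y : T.ball x (2 * m)), ENNReal.ofReal (‖u y‖)) := by
          rw [hcount, mul_assoc]
      _ ≤ 2 * T.maxOp u x := mul_le_mul' le_rfl hmax
      _ ≤ 2 * (T.maxOp u x + ENNReal.ofReal (‖u x‖)) :=
          mul_le_mul' le_rfl le_self_add
      _ = ENNReal.ofReal 2 * (T.maxOp u x + ENNReal.ofReal (‖u x‖)) := by
          rw [h2]


end HomTree
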